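/- arXiv:2006.02276 — 2 statements merged into one kernel-verified Lean document; each statement's English description precedes it below -/
import Mathlib

section
/- Let X be a Niebrzydowski (vertical) tribracket, i.e., a set with a ternary operation ⟨,,⟩ satisfying the invertibility axioms (i.i)–(i.iii) and the exchange axioms ⟨⟨a,b,c⟩,c,d⟩ = ⟨⟨a,b,⟨b,c,d⟩⟩,⟨b,c,d⟩,d⟩ and ⟨a,b,⟨b,c,d⟩⟩ = ⟨a,⟨a,b,c⟩,⟨⟨a,b,c⟩,c,d⟩⟩ for all a,b,c,d. Then setting ⟨a,b,c⟩_c = ⟨a,b,c⟩_p = ⟨a,b,c⟩ yields a psybracket on X. -/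
structure Psybracket (X : Type*) where
  c : X → X → X → X
  p : X → X → X → X
  exi : ∀ a b cc : X, ∃! x, c a b x = cc
  exii : ∀ a b cc : X, ∃! y, c a y b = cc
  exiii : ∀ a b cc : X, ∃! z, c z a b = cc
  exiv : ∀ b cc : X, ∃! u, p u b cc = b
  exv : ∀ a b : X, ∃! v, p a b v = b
  axii : ∀ a b cc : X, p a (c a b cc) cc = c a (p a b cc) cc
  axiii_i : ∀ a b cc d : X,
    c (c a b cc) cc d = c (c a b (c b cc d)) (c b cc d) d
  axiii_ii : ∀ a b cc d : X,
    c (c a b cc) cc d = c (c a b (p b cc d)) (p b cc d) d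
  axiii_iii : ∀ a b cc d : X,
    c (p a b cc) cc d = p (c a b (c b cc d)) (c b cc d) d
  axiii_iv : ∀ a b cc d : X,
    c a b (c b cc d) = c a (c a b cc) (c (c a b cc) cc d)
  axiii_v : ∀ a b cc d : X,
    c a b (c b cc d) = c a (p a b cc) (c (p a b cc) cc d)
  axiii_vi : ∀ a b cc d : X,
    c a b (p b cc d) = p a (c a b cc) (c (c a b cc) cc d)
structure Tribracket (X : Type*) where
  op : X → X → X → X
  exi : ∀ a b c : X, ∃! x, op a b x = c
  exii : ∀ a b c : X, ∃! y, op a y b = c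
  exiii : ∀ a b c : X, ∃! z, op z a b = c
  ex1 : ∀ a b c d : X,
    op (op a b c) c d = op (op a b (op b c d)) (op b c d) d
  ex2 : ∀ a b c d : X,
    op a b (op b c d) = op a (op a b c) (op (op a b c) c d)

theorem stmt8 (X : Type*) (T : Tribracket X) :
    ∃ P : Psybracket X, P.c = T.op ∧ P.p = T.op := by
  exact ⟨⟨T.op, T.op, T.exi, T.exii, T.exiii,
    fun b cc => T.exiii b cc b, fun a b => T.exi a b b,
    fun a b cc => rfl,
    T.ex1, T.ex1, T.ex1, T.ex2, T.ex2, T.ex2⟩, rfl, rfl⟩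
end

section
/- Let X be a Niebrzydowski tribracket and define ⟨a,b,c⟩_p as the unique d with ⟨a,d,c⟩ = b. Then for all a,b,c ∈ X there exist unique u,v ∈ X with ⟨u,b,c⟩_p = b and ⟨a,b,v⟩_p = b, so axioms (i.iv) and (i.v) of a psybracket hold. -/
theorem stmt10 (X : Type*) (T : Tribracket X) (p : X → X → X → X)
    (hp : ∀ a b c : X, T.op a (p a b c) c = b) :
    ∀ a b c : X, (∃! u : X, p u b c = b) ∧ (∃! v : X, p a b v = b) := by
  have key : ∀ a b c : X, p a b c = b ↔ T.op a b c = b := by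
    intro a b c
    constructor
    · intro h; have h2 := hp a b c; rwa [h] at h2
    · intro h
      obtain ⟨y, _, huniq⟩ := T.exii a c b
      have h1 := huniq (p a b c) (hp a b c)
      have h2 := huniq b h
      rw [h1, h2]
  intro a b c
  constructor
  · obtain ⟨u, hu, huniq⟩ := T.exiii b c b
    exact ⟨u, (key u b c).mpr hu, fun w hw => huniq w ((key w b c).mp hw)⟩
  · obtain ⟨v, hv, hvuniq⟩ := T.exi a b b
    exact ⟨v, (key a b v).mpr hv, fun w hw => hvuniq w ((key a b w).mp hw)⟩
end
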